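/- Let BCs 1, …, n be listed in a fixed order, each non-increasing (for every i and every j < l_i, h_i^j ≥ h_i^{j+1}). Define the greedy packing q recursively by q(1) = 1 and, for k ≥ 1, q(k+1) = the least integer m ≥ q(k) such that placing BC k+1 at cell m keeps the packing of BCs 1,…,k+1 feasible. Then q is a feasible order-preserving packing, and L(q) ≤ L(p) for every feasible order-preserving packing p, where a packing p is order-preserving if p(i) ≤ p(j) whenever i < j. -/
import Mathlib


/-!
A bar chart (BC) `i` has `l i` bars with heights `h i 0, …, h i (l i - 1)` in `(0,1]`.
A packing `p` places bar `j` of BC `i` in cell `p i + j` (cells are `1, 2, …`).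
-/

/-- Validity of the data: each BC is nonempty and all bar heights lie in `(0,1]`. -/
def ValidBC {n : ℕ} (l : Fin n → ℕ) (h : Fin n → ℕ → ℝ) : Prop :=
  (∀ i, 0 < l i) ∧ ∀ i j, j < l i → h i j ∈ Set.Ioc (0 : ℝ) 1

/-- Total height of the bars lying in cell `c` under packing `p`. -/
def cellLoad {n : ℕ} (l : Fin n → ℕ) (h : Fin n → ℕ → ℝ) (p : Fin n → ℕ) (c : ℕ) : ℝ :=
  ∑ i, ∑ j ∈ Finset.range (l i), if p i + j = c then h i j else 0

/-- A packing is feasible if cells start at 1 and every cell carries total height at most 1. -/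
def Feasible {n : ℕ} (l : Fin n → ℕ) (h : Fin n → ℕ → ℝ) (p : Fin n → ℕ) : Prop :=
  (∀ i, 1 ≤ p i) ∧ ∀ c, cellLoad l h p c ≤ 1

/-- The (finite) set of cells containing at least one bar. -/
def occupied {n : ℕ} (l : Fin n → ℕ) (p : Fin n → ℕ) : Finset ℕ :=
  (Finset.univ.sigma fun i => Finset.range (l i)).image fun x => p x.1 + x.2

/-- The length of a packing: the number of cells containing at least one bar. -/
def packLen {n : ℕ} (l : Fin n → ℕ) (p : Fin n → ℕ) : ℕ :=
  (occupied l p).card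

/-- The minimum length of a feasible packing. -/
noncomputable def OPT {n : ℕ} (l : Fin n → ℕ) (h : Fin n → ℕ → ℝ) : ℕ :=
  sInf {m | ∃ p, Feasible l h p ∧ packLen l p = m}

/-- Contribution to cell `c` of BC `i` when placed at cell `m`. -/
def bcLoad {n : ℕ} (l : Fin n → ℕ) (h : Fin n → ℕ → ℝ) (i : Fin n) (m c : ℕ) : ℝ :=
  ∑ j ∈ Finset.range (l i), if m + j = c then h i j else 0

/-- Total height in cell `c` contributed by the BCs of index less than `K`. -/
def partialLoad {n : ℕ} (l : Fin n → ℕ) (h : Fin n → ℕ → ℝ) (q : Fin n → ℕ)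
    (K c : ℕ) : ℝ :=
  ∑ i : Fin n, if (i : ℕ) < K then bcLoad l h i (q i) c else 0

/-- `q` is the greedy packing: BC 1 is placed at cell 1 and, inductively, BC `k+1`
is placed at the least cell `m ≥ q k` such that placing it there keeps the packing
of the first `k+1` BCs feasible. -/
def IsGreedy {n : ℕ} (l : Fin n → ℕ) (h : Fin n → ℕ → ℝ) (q : Fin n → ℕ) : Prop :=
  (∀ h0 : 0 < n, q ⟨0, h0⟩ = 1) ∧
  ∀ (k : ℕ) (hk : k + 1 < n),
    q ⟨k + 1, hk⟩ = sInf {m | q ⟨k, Nat.lt_of_succ_lt hk⟩ ≤ m ∧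
      ∀ c, partialLoad l h q (k + 1) c + bcLoad l h ⟨k + 1, hk⟩ m c ≤ 1}

section Helpers
variable {n : ℕ} (l : Fin n → ℕ) (h : Fin n → ℕ → ℝ)

lemma bcLoad_eq (i : Fin n) (m c : ℕ) :
    bcLoad l h i m c = if m ≤ c ∧ c < m + l i then h i (c - m) else 0 := by
  unfold bcLoad
  by_cases hc : m ≤ c ∧ c < m + l i
  · rw [if_pos hc, Finset.sum_eq_single (c - m)]
    · rw [if_pos (by omega)]
    · intro j hj hne
      rw [Finset.mem_range] at hj
      rw [if_neg (by omega)]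
    · intro hmem
      exact absurd (Finset.mem_range.mpr (by omega)) hmem
  · rw [if_neg hc]
    apply Finset.sum_eq_zero
    intro j hj
    rw [Finset.mem_range] at hj
    rw [if_neg (by omega)]

lemma bcLoad_nonneg (hval : ValidBC l h) (i : Fin n) (m c : ℕ) :
    0 ≤ bcLoad l h i m c := by
  rw [bcLoad_eq]
  split
  · exact (hval.2 i (c - m) (by omega)).1.le
  · exact le_refl 0

lemma bcLoad_le_one (hval : ValidBC l h) (i : Fin n) (m c : ℕ) :
    bcLoad l h i m c ≤ 1 := by
  rw [bcLoad_eq]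
  split
  · exact (hval.2 i (c - m) (by omega)).2
  · exact zero_le_one

lemma h_anti (hval : ValidBC l h)
    (hni : ∀ (i : Fin n) (j : ℕ), j + 1 < l i → h i (j + 1) ≤ h i j)
    (i : Fin n) : ∀ j' j, j ≤ j' → j' < l i → h i j' ≤ h i j := by
  intro j'
  induction j' with
  | zero =>
    intro j hj _
    obtain rfl : j = 0 := by omega
    exact le_refl _
  | succ m ih =>
    intro j hj hlt
    rcases Nat.eq_or_lt_of_le hj with rfl | hlt2
    · exact le_refl _
    · exact le_trans (hni i m hlt) (ih j (by omega) (by omega))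

lemma bcLoad_mono (hval : ValidBC l h)
    (hni : ∀ (i : Fin n) (j : ℕ), j + 1 < l i → h i (j + 1) ≤ h i j)
    (i : Fin n) {a b c : ℕ} (hab : a ≤ b) (hbc : b ≤ c) :
    bcLoad l h i a c ≤ bcLoad l h i b c := by
  rw [bcLoad_eq, bcLoad_eq]
  by_cases h1 : a ≤ c ∧ c < a + l i
  · rw [if_pos h1, if_pos ⟨hbc, by omega⟩]
    exact h_anti l h hval hni i (c - a) (c - b) (by omega) (by omega)
  · rw [if_neg h1]
    split
    · exact (hval.2 i (c - b) (by omega)).1.le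
    · exact le_refl 0

lemma cellLoad_eq {p : Fin n → ℕ} {c : ℕ} :
    cellLoad l h p c = ∑ i, bcLoad l h i (p i) c := rfl

lemma partialLoad_succ (q : Fin n → ℕ) (k : ℕ) (hk : k < n) (c : ℕ) :
    partialLoad l h q (k + 1) c
      = partialLoad l h q k c + bcLoad l h ⟨k, hk⟩ (q ⟨k, hk⟩) c := by
  unfold partialLoad
  have key : ∀ i : Fin n, (if (i : ℕ) < k + 1 then bcLoad l h i (q i) c else 0)
      = (if (i : ℕ) < k then bcLoad l h i (q i) c else 0)
      + (if i = ⟨k, hk⟩ then bcLoad l h i (q i) c else 0) := by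
    intro i
    by_cases h1 : (i : ℕ) < k
    · rw [if_pos (by omega), if_pos h1, if_neg (by simp [Fin.ext_iff]; omega), add_zero]
    · by_cases h2 : (i : ℕ) = k
      · rw [if_pos (by omega), if_neg h1, if_pos (by simp [Fin.ext_iff, h2]), zero_add]
      · rw [if_neg (by omega), if_neg h1, if_neg (by simp [Fin.ext_iff]; omega), add_zero]
  rw [Finset.sum_congr rfl fun i _ => key i, Finset.sum_add_distrib]
  congr 1
  rw [Finset.sum_ite_eq' Finset.univ ⟨k, hk⟩ (fun i => bcLoad l h i (q i) c),
    if_pos (Finset.mem_univ _)]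

lemma partialLoad_zero (q : Fin n → ℕ) (c : ℕ) : partialLoad l h q 0 c = 0 := by
  unfold partialLoad
  exact Finset.sum_eq_zero fun i _ => by rw [if_neg (by omega)]

lemma partialLoad_le_cellLoad (hval : ValidBC l h) (q : Fin n → ℕ) (K c : ℕ) :
    partialLoad l h q K c ≤ cellLoad l h q c := by
  rw [cellLoad_eq]
  apply Finset.sum_le_sum
  intro i _
  split
  · exact le_refl _
  · exact bcLoad_nonneg l h hval i _ _

lemma partialLoad_eq_zero (q : Fin n → ℕ) (K c : ℕ)
    (hc : ∀ i : Fin n, (i : ℕ) < K → q i + l i ≤ c) :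
    partialLoad l h q K c = 0 := by
  unfold partialLoad
  apply Finset.sum_eq_zero
  intro i _
  split
  · rename_i hi
    rw [bcLoad_eq, if_neg (by have := hc i hi; omega)]
  · rfl

def triv {n : ℕ} (l : Fin n → ℕ) : Fin n → ℕ :=
  fun i => 1 + ∑ j ∈ Finset.univ.filter (fun j : Fin n => j < i), l j

lemma triv_mono : Monotone (triv l) := by
  intro i i' hii
  unfold triv
  have : Finset.univ.filter (fun j : Fin n => j < i)
      ⊆ Finset.univ.filter (fun j : Fin n => j < i') := by
    intro x hx
    simp only [Finset.mem_filter, Finset.mem_univ, true_and] at hx ⊢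
    exact lt_of_lt_of_le hx hii
  have h2 : ∑ j ∈ Finset.univ.filter (fun j : Fin n => j < i), l j
      ≤ ∑ j ∈ Finset.univ.filter (fun j : Fin n => j < i'), l j :=
    Finset.sum_le_sum_of_subset this
  omega

lemma triv_add (i i' : Fin n) (hii : i < i') : triv l i + l i ≤ triv l i' := by
  have hsub : insert i (Finset.univ.filter (fun j : Fin n => j < i))
      ⊆ Finset.univ.filter (fun j : Fin n => j < i') := by
    intro x hx
    simp only [Finset.mem_insert, Finset.mem_filter, Finset.mem_univ, true_and] at hx ⊢
    rcases hx with rfl | hx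
    · exact hii
    · exact lt_trans hx hii
  have hs : ∑ j ∈ insert i (Finset.univ.filter (fun j : Fin n => j < i)), l j
      ≤ ∑ j ∈ Finset.univ.filter (fun j : Fin n => j < i'), l j :=
    Finset.sum_le_sum_of_subset hsub
  rw [Finset.sum_insert (by simp)] at hs
  unfold triv
  omega

lemma triv_feasible (hval : ValidBC l h) : Feasible l h (triv l) := by
  constructor
  · intro i; unfold triv; omega
  · intro c
    rw [cellLoad_eq]
    by_cases hex : ∃ i : Fin n, triv l i ≤ c ∧ c < triv l i + l i
    · obtain ⟨i₀, hi₀⟩ := hex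
      rw [Finset.sum_eq_single i₀]
      · exact bcLoad_le_one l h hval i₀ _ _
      · intro i _ hne
        rw [bcLoad_eq, if_neg]
        rcases lt_trichotomy i i₀ with hlt | heq | hgt
        · have := triv_add l i i₀ hlt
          omega
        · exact absurd heq hne
        · have := triv_add l i₀ i hgt
          omega
      · intro hmem
        exact absurd (Finset.mem_univ i₀) hmem
    · push_neg at hex
      rw [Finset.sum_eq_zero]
      · exact zero_le_one
      intro i _
      rw [bcLoad_eq, if_neg]
      intro hcon
      exact absurd (hex i hcon.1) (by omega)

lemma greedy_inv (hval : ValidBC l h)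
    (hni : ∀ (i : Fin n) (j : ℕ), j + 1 < l i → h i (j + 1) ≤ h i j)
    (q : Fin n → ℕ) (hq : IsGreedy l h q) :
    ∀ k (hk : k < n),
      (∀ c, partialLoad l h q (k + 1) c ≤ 1) ∧
      (∀ i : Fin n, (i : ℕ) ≤ k → 1 ≤ q i ∧ q i ≤ q ⟨k, hk⟩) ∧
      (∀ p, Feasible l h p → Monotone p → ∀ i : Fin n, (i : ℕ) ≤ k → q i ≤ p i) ∧
      (∀ c, 1 ≤ c → (∃ i : Fin n, (i : ℕ) ≤ k ∧ c < q i + l i) →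
        ∃ (i : Fin n) (j : ℕ), (i : ℕ) ≤ k ∧ j < l i ∧ q i + j = c) := by
  intro k
  induction k with
  | zero =>
    intro hk
    have hq0 : q ⟨0, hk⟩ = 1 := hq.1 hk
    have heq : ∀ i : Fin n, (i : ℕ) ≤ 0 → i = ⟨0, hk⟩ := by
      intro i hi
      exact Fin.ext (show (i : ℕ) = 0 by omega)
    refine ⟨?_, ?_, ?_, ?_⟩
    · intro c
      rw [partialLoad_succ l h q 0 hk c, partialLoad_zero, zero_add]
      exact bcLoad_le_one l h hval _ _ _
    · intro i hi
      rw [heq i hi, hq0]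
      exact ⟨le_refl 1, le_refl 1⟩
    · intro p hp hpm i hi
      rw [heq i hi, hq0]
      exact hp.1 _
    · intro c hc ⟨i, hi, hci⟩
      rw [heq i hi] at hci
      exact ⟨⟨0, hk⟩, c - 1, le_refl 0, by rw [hq0] at hci ⊢; omega⟩
  | succ k ih =>
    intro hk
    have hk' : k < n := Nat.lt_of_succ_lt hk
    obtain ⟨IA, IB, IC, ID⟩ := ih hk'
    set S : Set ℕ := {m | q ⟨k, Nat.lt_of_succ_lt hk⟩ ≤ m ∧
      ∀ c, partialLoad l h q (k + 1) c + bcLoad l h ⟨k + 1, hk⟩ m c ≤ 1} with hS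
    have hqdef : q ⟨k + 1, hk⟩ = sInf S := hq.2 k hk
    -- any feasible monotone p gives a member of S
    have hmem : ∀ p, Feasible l h p → Monotone p → p ⟨k + 1, hk⟩ ∈ S := by
      intro p hp hpm
      constructor
      · exact le_trans (IC p hp hpm ⟨k, hk'⟩ (le_refl k))
          (hpm (show (⟨k, hk'⟩ : Fin n) ≤ ⟨k + 1, hk⟩ by simp [Fin.le_def]))
      · intro c
        by_cases hc : c < p ⟨k + 1, hk⟩
        · rw [bcLoad_eq, if_neg (by omega), add_zero]
          exact IA c
        · push_neg at hc
          have h1 : partialLoad l h q (k + 1) c ≤ partialLoad l h p (k + 1) c := by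
            unfold partialLoad
            apply Finset.sum_le_sum
            intro i _
            split
            · rename_i hi
              apply bcLoad_mono l h hval hni i (IC p hp hpm i (by omega))
              exact le_trans (hpm (show i ≤ ⟨k + 1, hk⟩ by simp [Fin.le_def]; omega)) hc
            · exact le_refl 0
          have h2 : partialLoad l h p (k + 1) c + bcLoad l h ⟨k + 1, hk⟩ (p ⟨k + 1, hk⟩) c
              = partialLoad l h p (k + 2) c := (partialLoad_succ l h p (k + 1) hk c).symm
          have h3 := partialLoad_le_cellLoad l h hval p (k + 2) c
          have h4 := hp.2 c
          linarith
    -- membership from upper bounds on all earlier BCs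
    have hmem2 : ∀ m, (∀ i : Fin n, (i : ℕ) ≤ k → q i + l i ≤ m) → m ∈ S := by
      intro m hm
      constructor
      · have := hm ⟨k, hk'⟩ (le_refl k)
        have := hval.1 ⟨k, hk'⟩
        omega
      · intro c
        by_cases hc : c < m
        · rw [bcLoad_eq, if_neg (by omega), add_zero]
          exact IA c
        · rw [partialLoad_eq_zero l h q (k + 1) c
            (fun i hi => le_trans (hm i (by omega)) (by omega)), zero_add]
          exact bcLoad_le_one l h hval _ _ _
    have hne : S.Nonempty := ⟨triv l ⟨k + 1, hk⟩, hmem (triv l) (triv_feasible l h hval) (triv_mono l)⟩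
    have hqin : q ⟨k + 1, hk⟩ ∈ S := by
      rw [hqdef]; exact Nat.sInf_mem hne
    have hqk1 : q ⟨k, hk'⟩ ≤ q ⟨k + 1, hk⟩ := hqin.1
    refine ⟨?_, ?_, ?_, ?_⟩
    · intro c
      rw [partialLoad_succ l h q (k + 1) hk c]
      exact hqin.2 c
    · intro i hi
      by_cases h1 : (i : ℕ) ≤ k
      · obtain ⟨ha, hb⟩ := IB i h1
        exact ⟨ha, le_trans hb hqk1⟩
      · have : i = ⟨k + 1, hk⟩ := Fin.ext (show (i : ℕ) = k + 1 by omega)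
        subst this
        refine ⟨le_trans (IB ⟨k, hk'⟩ (le_refl k)).1 hqk1, le_refl _⟩
    · intro p hp hpm i hi
      by_cases h1 : (i : ℕ) ≤ k
      · exact IC p hp hpm i h1
      · have : i = ⟨k + 1, hk⟩ := Fin.ext (show (i : ℕ) = k + 1 by omega)
        subst this
        rw [hqdef]
        exact Nat.sInf_le (hmem p hp hpm)
    · intro c hc ⟨i, hi, hci⟩
      by_cases hcase : ∃ i : Fin n, (i : ℕ) ≤ k ∧ c < q i + l i
      · obtain ⟨i', j, hi', hj, hij⟩ := ID c hc hcase
        exact ⟨i', j, by omega, hj, hij⟩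
      · push_neg at hcase
        have hik1 : i = ⟨k + 1, hk⟩ := by
          by_contra hcon
          exact absurd (hcase i (by
            have : (i : ℕ) ≠ k + 1 := fun he => hcon (Fin.ext he)
            omega)) (by omega)
        subst hik1
        have hle : q ⟨k + 1, hk⟩ ≤ c := by
          rw [hqdef]
          exact Nat.sInf_le (hmem2 c hcase)
        exact ⟨⟨k + 1, hk⟩, c - q ⟨k + 1, hk⟩, le_refl _, by omega, by omega⟩

def phi {n : ℕ} (l : Fin n → ℕ) (p : Fin n → ℕ) (c : ℕ) : ℕ :=
  ((occupied l p).filter (fun x => x ≤ c)).card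

lemma mem_occupied {p : Fin n → ℕ} {c : ℕ} :
    c ∈ occupied l p ↔ ∃ (i : Fin n) (j : ℕ), j < l i ∧ p i + j = c := by
  unfold occupied
  simp only [Finset.mem_image, Finset.mem_sigma, Finset.mem_univ, true_and,
    Finset.mem_range]
  constructor
  · rintro ⟨⟨i, j⟩, hj, he⟩
    exact ⟨i, j, hj, he⟩
  · rintro ⟨i, j, hj, he⟩
    exact ⟨⟨i, j⟩, hj, he⟩

lemma phi_mono (p : Fin n → ℕ) {c c' : ℕ} (hcc : c ≤ c') : phi l p c ≤ phi l p c' := by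
  apply Finset.card_le_card
  intro x hx
  simp only [Finset.mem_filter] at hx ⊢
  exact ⟨hx.1, le_trans hx.2 hcc⟩

lemma phi_strict (p : Fin n → ℕ) {c c' : ℕ} (hc' : c' ∈ occupied l p) (hlt : c < c') :
    phi l p c < phi l p c' := by
  apply Finset.card_lt_card
  constructor
  · intro x hx
    simp only [Finset.mem_filter] at hx ⊢
    exact ⟨hx.1, le_trans hx.2 (by omega)⟩
  · intro hsub
    have := hsub (by simp only [Finset.mem_filter]; exact ⟨hc', le_refl c'⟩)
    simp only [Finset.mem_filter] at this
    omega

lemma phi_inj (p : Fin n → ℕ) {c c' : ℕ} (hc : c ∈ occupied l p)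
    (hc' : c' ∈ occupied l p) (he : phi l p c = phi l p c') : c = c' := by
  rcases lt_trichotomy c c' with hlt | heq | hgt
  · exact absurd he (by have := phi_strict l p hc' hlt; omega)
  · exact heq
  · exact absurd he (by have := phi_strict l p hc hgt; omega)

lemma phi_succ (p : Fin n → ℕ) {c : ℕ} (hc : c + 1 ∈ occupied l p) :
    phi l p (c + 1) = phi l p c + 1 := by
  unfold phi
  have hset : (occupied l p).filter (fun x => x ≤ c + 1)
      = insert (c + 1) ((occupied l p).filter (fun x => x ≤ c)) := by
    ext x
    simp only [Finset.mem_filter, Finset.mem_insert]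
    constructor
    · rintro ⟨hx, hxc⟩
      rcases Nat.eq_or_lt_of_le hxc with he | hlt
      · exact Or.inl he
      · exact Or.inr ⟨hx, by omega⟩
    · rintro (rfl | ⟨hx, hxc⟩)
      · exact ⟨hc, le_refl _⟩
      · exact ⟨hx, by omega⟩
  rw [hset, Finset.card_insert_of_notMem (by simp only [Finset.mem_filter]; omega)]

def comp {n : ℕ} (l : Fin n → ℕ) (p : Fin n → ℕ) : Fin n → ℕ := fun i => phi l p (p i)

lemma comp_shift (hval : ValidBC l h) (p : Fin n → ℕ) (i : Fin n) :
    ∀ j, j < l i → phi l p (p i + j) = comp l p i + j := by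
  intro j
  induction j with
  | zero => intro _; rfl
  | succ m ih =>
    intro hm
    have hocc : p i + m + 1 ∈ occupied l p :=
      (mem_occupied l).mpr ⟨i, m + 1, hm, by omega⟩
    have : p i + (m + 1) = (p i + m) + 1 := by omega
    rw [this, phi_succ l p hocc, ih (by omega)]
    omega

lemma comp_mono (p : Fin n → ℕ) (hpm : Monotone p) : Monotone (comp l p) :=
  fun i i' hii => phi_mono l p (hpm hii)

lemma comp_pos (hval : ValidBC l h) (p : Fin n → ℕ) (i : Fin n) : 1 ≤ comp l p i := by
  have : p i ∈ occupied l p := (mem_occupied l).mpr ⟨i, 0, hval.1 i, by omega⟩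
  have : p i ∈ (occupied l p).filter (fun x => x ≤ p i) := by
    simp only [Finset.mem_filter]
    exact ⟨this, le_refl _⟩
  exact Finset.card_pos.mpr ⟨p i, this⟩

lemma comp_extent (hval : ValidBC l h) (p : Fin n → ℕ) (i : Fin n) :
    comp l p i + l i ≤ packLen l p + 1 := by
  have hl := hval.1 i
  have hocc : p i + (l i - 1) ∈ occupied l p :=
    (mem_occupied l).mpr ⟨i, l i - 1, by omega, rfl⟩
  have h1 : phi l p (p i + (l i - 1)) = comp l p i + (l i - 1) :=
    comp_shift l h hval p i (l i - 1) (by omega)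
  have h2 : phi l p (p i + (l i - 1)) ≤ packLen l p :=
    Finset.card_le_card (Finset.filter_subset _ _)
  omega

lemma comp_feasible (hval : ValidBC l h) (p : Fin n → ℕ) (hp : Feasible l h p) :
    Feasible l h (comp l p) := by
  refine ⟨comp_pos l h hval p, ?_⟩
  intro d
  rw [cellLoad_eq]
  by_cases hex : ∃ (i : Fin n) (j : ℕ), j < l i ∧ comp l p i + j = d
  · obtain ⟨i₀, j₀, hj₀, hd⟩ := hex
    have hkey : ∀ (i : Fin n) (j : ℕ), j < l i →
        (comp l p i + j = d ↔ p i + j = p i₀ + j₀) := by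
      intro i j hj
      constructor
      · intro he
        apply phi_inj l p ((mem_occupied l).mpr ⟨i, j, hj, rfl⟩)
          ((mem_occupied l).mpr ⟨i₀, j₀, hj₀, rfl⟩)
        rw [comp_shift l h hval p i j hj, comp_shift l h hval p i₀ j₀ hj₀, he, hd]
      · intro he
        rw [← comp_shift l h hval p i j hj, he, comp_shift l h hval p i₀ j₀ hj₀, hd]
    have : ∀ i : Fin n, bcLoad l h i (comp l p i) d = bcLoad l h i (p i) (p i₀ + j₀) := by
      intro i
      unfold bcLoad
      apply Finset.sum_congr rfl
      intro j hj
      rw [Finset.mem_range] at hj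
      by_cases hcond : p i + j = p i₀ + j₀
      · rw [if_pos ((hkey i j hj).mpr hcond), if_pos hcond]
      · rw [if_neg (fun he => hcond ((hkey i j hj).mp he)), if_neg hcond]
    rw [Finset.sum_congr rfl fun i _ => this i, ← cellLoad_eq]
    exact hp.2 _
  · push_neg at hex
    rw [Finset.sum_eq_zero]
    · exact zero_le_one
    intro i _
    unfold bcLoad
    apply Finset.sum_eq_zero
    intro j hj
    rw [Finset.mem_range] at hj
    rw [if_neg (hex i j hj)]

lemma partialLoad_all (q : Fin n → ℕ) (c : ℕ) :
    partialLoad l h q n c = cellLoad l h q c := by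
  rw [cellLoad_eq]
  unfold partialLoad
  exact Finset.sum_congr rfl fun i _ => if_pos i.isLt

end Helpers

theorem greedy_optimal_order_preserving' {n : ℕ} (l : Fin n → ℕ) (h : Fin n → ℕ → ℝ)
    (hval : ValidBC l h)
    (hni : ∀ (i : Fin n) (j : ℕ), j + 1 < l i → h i (j + 1) ≤ h i j)
    (q : Fin n → ℕ) (hq : IsGreedy l h q) :
    Feasible l h q ∧ Monotone q ∧
      ∀ p : Fin n → ℕ, Feasible l h p → Monotone p → packLen l q ≤ packLen l p := by
  have Inv := greedy_inv l h hval hni q hq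
  rcases Nat.eq_zero_or_pos n with hn | hn
  · subst hn
    have hocc : ∀ p : Fin 0 → ℕ, occupied l p = ∅ := by
      intro p
      apply Finset.eq_empty_of_forall_notMem
      intro c hc
      obtain ⟨i, _, _, _⟩ := (mem_occupied l).mp hc
      exact absurd i.isLt (by omega)
    refine ⟨⟨fun i => absurd i.isLt (by omega), fun c => ?_⟩,
      fun i _ _ => absurd i.isLt (by omega), fun p _ _ => ?_⟩
    · rw [← partialLoad_all l h q c, partialLoad_zero]
      exact zero_le_one
    · simp [packLen, hocc]
  · obtain ⟨m, rfl⟩ : ∃ m, n = m + 1 := ⟨n - 1, by omega⟩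
    have hm : m < m + 1 := Nat.lt_succ_self m
    have hfq : Feasible l h q := by
      constructor
      · intro i
        exact ((Inv i.val i.isLt).2.1 i (le_refl _)).1
      · intro c
        rw [← partialLoad_all l h q c]
        exact (Inv m hm).1 c
    have hmq : Monotone q := by
      intro i i' hii
      have := ((Inv i'.val i'.isLt).2.1 i hii).2
      simpa using this
    refine ⟨hfq, hmq, ?_⟩
    intro p hp hpm
    set M : ℕ := Finset.univ.sup (fun i : Fin (m + 1) => q i + l i) with hM
    have hocc : occupied l q = Finset.Icc 1 (M - 1) := by
      ext c
      rw [mem_occupied l, Finset.mem_Icc]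
      constructor
      · rintro ⟨i, j, hj, rfl⟩
        have h1 := hfq.1 i
        have h2 : q i + l i ≤ M := Finset.le_sup (f := fun i : Fin (m + 1) => q i + l i) (Finset.mem_univ i)
        omega
      · rintro ⟨hc1, hc2⟩
        obtain ⟨i₀, _, hi₀⟩ :=
          Finset.exists_mem_eq_sup Finset.univ Finset.univ_nonempty
            (fun i : Fin (m + 1) => q i + l i)
        have hli₀ := hval.1 i₀
        have hqi₀ := hfq.1 i₀
        have hcM : c < q i₀ + l i₀ := by omega
        obtain ⟨i, j, _, hj, he⟩ := (Inv m hm).2.2.2 c hc1 ⟨i₀, by omega, hcM⟩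
        exact ⟨i, j, hj, he⟩
    have hlenq : packLen l q = M - 1 := by
      rw [packLen, hocc, Nat.card_Icc]
      omega
    have hcomp_feas := comp_feasible l h hval p hp
    have hcomp_mono := comp_mono l p hpm
    have hMle : M ≤ packLen l p + 1 := by
      apply Finset.sup_le
      intro i _
      have h1 : q i ≤ comp l p i :=
        (Inv m hm).2.2.1 (comp l p) hcomp_feas hcomp_mono i (by omega)
      have h2 := comp_extent l h hval p i
      omega
    omega


/-- for a fixed order of non-increasing BCs, the greedy packing `q` is
a feasible order-preserving packing, and it is optimal among all feasible
order-preserving packings. -/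
theorem greedy_optimal_order_preserving {n : ℕ} (l : Fin n → ℕ) (h : Fin n → ℕ → ℝ)
    (hval : ValidBC l h)
    (hni : ∀ (i : Fin n) (j : ℕ), j + 1 < l i → h i (j + 1) ≤ h i j)
    (q : Fin n → ℕ) (hq : IsGreedy l h q) :
    Feasible l h q ∧ Monotone q ∧
      ∀ p : Fin n → ℕ, Feasible l h p → Monotone p → packLen l q ≤ packLen l p := by
  exact greedy_optimal_order_preserving' l h hval hni q hq
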